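/- Suppose X has a Lebesgue density f_X supported on [0,1]. Then Z has a Lebesgue density f_Z given, for almost every s ∈ [−1,1], by f_Z(s) = (1/(2√2)) ∫₀^{(1+s)/2} f_X(x) / √((1+s−2x)(1−x)) dx (and f_Z vanishes outside [−1,1]). -/

import Mathlib

/-!
Conditionally on `X = x`, `Z = (2x - 1) + (2 - 2x) T²` is an increasing function of `|T|`, and
`|T|` is uniform on `(0, 1]`; the one-dimensional change of variables `s = (2x - 1) + (2 - 2x) t²`
gives the conditional density `1 / (2 √((2 - 2x)(s - 2x + 1)))` on `(2x - 1, 1]`. By independence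
the law of `Z` is the mixture of these conditional laws against `f_X(x) dx`, so by Tonelli its
density is `∫ f_X(x) · (conditional density) dx`, which is the stated integral. That integral may be
infinite at some points, but only on a null set, since `Z` has total mass one.
-/

open MeasureTheory Set
open scoped ENNReal

lemma map_prod_eq_withDensity_lintegral {α β γ : Type*} [MeasurableSpace α] [MeasurableSpace β]
    [MeasurableSpace γ] {μ : Measure α} {ν : Measure β} {ρ : Measure γ} [SFinite μ] [SFinite ν]
    [SFinite ρ] {g : α × β → γ} (hg : Measurable g) {κ : α → γ → ℝ≥0∞}
    (hκ : Measurable (Function.uncurry κ))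
    (h : ∀ᵐ x ∂μ, ν.map (fun y => g (x, y)) = ρ.withDensity (κ x)) :
    (μ.prod ν).map g = ρ.withDensity fun z => ∫⁻ x, κ x z ∂μ := by
  ext A hA
  rw [Measure.map_apply hg hA, Measure.prod_apply (hg hA), withDensity_apply _ hA]
  calc ∫⁻ x, ν (Prod.mk x ⁻¹' (g ⁻¹' A)) ∂μ = ∫⁻ x, ∫⁻ z in A, κ x z ∂ρ ∂μ := by
        refine lintegral_congr_ae (h.mono fun x hx => ?_)
        dsimp only
        rw [← withDensity_apply _ hA, ← hx, Measure.map_apply (by fun_prop) hA]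
        rfl
    _ = ∫⁻ z in A, ∫⁻ x, κ x z ∂μ ∂ρ := lintegral_lintegral_swap hκ.aemeasurable

lemma map_volume_restrict_Icc_of_even {f : ℝ → ℝ} (hf : Measurable f)
    (heven : ∀ t, f (-t) = f t) {r : ℝ} (hr : 0 ≤ r) :
    (volume.restrict (Icc (-r) r)).map f = (2 : ℝ≥0∞) • (volume.restrict (Ioc 0 r)).map f := by
  have hneg : (volume.restrict (Icc 0 r)).map Neg.neg = volume.restrict (Icc (-r) 0) := by
    have := measurableEmbedding_neg.restrict_map (volume : Measure ℝ) (Icc (-r) 0)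
    rw [Measure.map_neg_eq_self] at this
    simpa using this.symm
  have hf_neg : f ∘ Neg.neg = f := funext heven
  rw [← Icc_union_Ioc_eq_Icc (neg_nonpos.2 hr) hr,
    Measure.restrict_union (disjoint_left.2 fun _ h h' => h'.1.not_ge h.2) measurableSet_Ioc,
    Measure.map_add _ _ hf, ← hneg, Measure.map_map hf measurable_neg, hf_neg,
    Measure.restrict_congr_set Ioc_ae_eq_Icc, two_smul]

lemma image_const_add_mul_sq_Ioc {a b : ℝ} (hb : 0 < b) :
    (fun t : ℝ => a + b * t ^ 2) '' Ioc 0 1 = Ioc a (a + b) := by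
  ext s
  constructor
  · rintro ⟨t, ⟨ht0, ht1⟩, rfl⟩
    have : t ^ 2 ≤ 1 := pow_le_one₀ ht0.le ht1
    constructor <;> dsimp only <;> nlinarith [mul_pos hb (pow_pos ht0 2)]
  · rintro ⟨has, hsb⟩
    have hu : 0 < (s - a) / b := div_pos (by linarith) hb
    refine ⟨√((s - a) / b), ⟨Real.sqrt_pos.mpr hu, ?_⟩, ?_⟩
    · rw [Real.sqrt_le_one, div_le_one hb]
      linarith
    · dsimp only
      rw [Real.sq_sqrt hu.le]
      field_simp
      ring

lemma hasDerivAt_const_add_mul_sq (a b t : ℝ) :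
    HasDerivAt (fun t : ℝ => a + b * t ^ 2) (2 * b * t) t := by
  simpa [mul_comm, mul_left_comm] using ((hasDerivAt_pow 2 t).const_mul b).const_add a

lemma map_volume_restrict_Ioc_const_add_mul_sq {a b : ℝ} (hb : 0 < b) :
    (volume.restrict (Ioc (0 : ℝ) 1)).map (fun t => a + b * t ^ 2) =
      volume.withDensity
        ((Ioc a (a + b)).indicator fun s => ENNReal.ofReal (1 / (2 * √(b * (s - a))))) := by
  set ψ : ℝ → ℝ := fun t => a + b * t ^ 2
  have hψ : Measurable ψ := by fun_prop
  have hψ_inj : InjOn ψ (Ioc 0 1) := StrictMonoOn.injOn fun x hx y _ hxy => by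
    have := hx.1
    nlinarith [mul_lt_mul_of_pos_left hxy hb]
  ext A hA
  have hS : MeasurableSet (Ioc 0 1 ∩ ψ ⁻¹' A) := measurableSet_Ioc.inter (hψ hA)
  rw [Measure.map_apply hψ hA, Measure.restrict_apply (hψ hA), withDensity_apply _ hA,
    lintegral_indicator measurableSet_Ioc, Measure.restrict_restrict measurableSet_Ioc,
    ← image_const_add_mul_sq_Ioc hb, ← image_inter_preimage,
    lintegral_image_eq_lintegral_abs_deriv_mul hS
      (fun t _ => (hasDerivAt_const_add_mul_sq a b t).hasDerivWithinAt)
      (hψ_inj.mono inter_subset_left), inter_comm, ← setLIntegral_one]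
  refine setLIntegral_congr_fun hS fun t ⟨⟨ht0, _⟩, _⟩ => ?_
  have hsqrt : √(b * (ψ t - a)) = b * t := by
    rw [show b * (ψ t - a) = (b * t) ^ 2 by simp only [ψ]; ring]
    exact Real.sqrt_sq (by positivity)
  rw [hsqrt, ← ENNReal.ofReal_mul (abs_nonneg _), abs_of_pos (by positivity), mul_one_div,
    mul_assoc, mul_div_mul_left _ _ two_ne_zero, div_self (by positivity), ENNReal.ofReal_one]

noncomputable def condDensityZ (x s : ℝ) : ℝ≥0∞ :=
  (Ioc (2 * x - 1) 1).indicator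
    (fun s => ENNReal.ofReal (1 / (2 * √((2 - 2 * x) * (s - (2 * x - 1)))))) s

lemma measurable_condDensityZ : Measurable (Function.uncurry condDensityZ) := by
  refine Measurable.ite ?_ (by fun_prop) measurable_const
  exact (measurableSet_lt (by fun_prop) measurable_snd).inter
    (measurableSet_le measurable_snd measurable_const)

lemma map_uniform_eq_withDensity_condDensityZ {x : ℝ} (hx : x < 1) :
    ((2 : ℝ≥0∞)⁻¹ • volume.restrict (Icc (-1 : ℝ) 1)).map
        (fun t => t ^ 2 + (1 - t ^ 2) * (2 * x - 1)) =
      volume.withDensity (condDensityZ x) := by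
  have hψ : (fun t : ℝ => t ^ 2 + (1 - t ^ 2) * (2 * x - 1)) =
      fun t => (2 * x - 1) + (2 - 2 * x) * t ^ 2 := by
    funext t
    ring
  rw [hψ, Measure.map_smul, map_volume_restrict_Icc_of_even (by fun_prop) (by simp) zero_le_one,
    smul_smul, ENNReal.inv_mul_cancel two_ne_zero ENNReal.ofNat_ne_top, one_smul,
    map_volume_restrict_Ioc_const_add_mul_sq (by linarith)]
  congr 1
  funext s
  rw [condDensityZ, show 2 * x - 1 + (2 - 2 * x) = 1 by ring]

lemma ofReal_mul_condDensityZ {f : ℝ → ℝ} (hf_nonneg : ∀ x, 0 ≤ f x) (hf_neg : ∀ x < 0, f x = 0)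
    {s : ℝ} (hs : s ≤ 1) (x : ℝ) :
    ENNReal.ofReal (f x) * condDensityZ x s =
      (Ico 0 ((1 + s) / 2)).indicator
        (fun x => ENNReal.ofReal (1 / (2 * √2) * (f x / √((1 + s - 2 * x) * (1 - x))))) x := by
  rcases lt_or_ge x 0 with hx0 | hx0
  · rw [hf_neg x hx0, ENNReal.ofReal_zero, zero_mul, indicator_of_notMem (fun h => h.1.not_gt hx0)]
  rcases lt_or_ge x ((1 + s) / 2) with hxs | hxs
  · have hsqrt : √((2 - 2 * x) * (s - (2 * x - 1))) = √2 * √((1 + s - 2 * x) * (1 - x)) := by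
      rw [← Real.sqrt_mul zero_le_two]
      ring_nf
    rw [condDensityZ, indicator_of_mem (mem_Ioc.2 ⟨by linarith, hs⟩),
      indicator_of_mem (mem_Ico.2 ⟨hx0, hxs⟩), hsqrt, ← ENNReal.ofReal_mul (hf_nonneg x)]
    congr 1
    ring
  · rw [condDensityZ, indicator_of_notMem (fun h => h.1.not_ge (by linarith)), mul_zero,
      indicator_of_notMem (fun h => h.2.not_ge hxs)]

lemma lintegral_ofReal_mul_condDensityZ {f : ℝ → ℝ} (hf : Measurable f)
    (hf_nonneg : ∀ x, 0 ≤ f x) (hf_neg : ∀ x < 0, f x = 0) {s : ℝ}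
    (hfin : ∫⁻ x, ENNReal.ofReal (f x) * condDensityZ x s ≠ ∞) :
    ∫⁻ x, ENNReal.ofReal (f x) * condDensityZ x s = ENNReal.ofReal
      (if s ∈ Icc (-1 : ℝ) 1 then
        (1 / (2 * √2)) * ∫ x in (0 : ℝ)..((1 + s) / 2), f x / √((1 + s - 2 * x) * (1 - x))
      else 0) := by
  rcases le_or_gt s 1 with hs1 | hs1
  swap
  · have hzero (x : ℝ) : condDensityZ x s = 0 :=
      indicator_of_notMem (fun h => h.2.not_gt hs1) _
    simp only [hzero, mul_zero, lintegral_zero,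
      if_neg fun h : s ∈ Icc (-1 : ℝ) 1 => h.2.not_gt hs1, ENNReal.ofReal_zero]
  simp_rw [ofReal_mul_condDensityZ hf_nonneg hf_neg hs1,
    lintegral_indicator measurableSet_Ico] at hfin ⊢
  rcases lt_or_ge s (-1) with hs | hs
  · rw [Ico_eq_empty (by linarith), Measure.restrict_empty, lintegral_zero_measure,
      if_neg fun h => h.1.not_gt hs, ENNReal.ofReal_zero]
  -- `integral_eq_lintegral_of_nonneg_ae` needs no integrability, only the finiteness `hfin`
  rw [if_pos ⟨hs, hs1⟩, ← intervalIntegral.integral_const_mul,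
    intervalIntegral.integral_of_le (by linarith), integral_Ioc_eq_integral_Ioo,
    ← integral_Ico_eq_integral_Ioo, integral_eq_lintegral_of_nonneg_ae,
    ENNReal.ofReal_toReal hfin]
  · exact ae_of_all _ fun x =>
      mul_nonneg (by positivity) (div_nonneg (hf_nonneg x) (Real.sqrt_nonneg _))
  · exact Measurable.aestronglyMeasurable (by fun_prop)

theorem density_of_Z
    {Ω : Type*} [MeasurableSpace Ω] (P : Measure Ω) [IsProbabilityMeasure P]
    (X T : Ω → ℝ) (hX : Measurable X) (hT : Measurable T)
    (hT_unif : Measure.map T P = (2 : ℝ≥0∞)⁻¹ • volume.restrict (Set.Icc (-1 : ℝ) 1))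
    (hindep : ProbabilityTheory.IndepFun X T P)
    (fX : ℝ → ℝ) (hfX_meas : Measurable fX) (hfX_nonneg : ∀ x, 0 ≤ fX x)
    (hfX_supp : ∀ x, x ∉ Set.Icc (0 : ℝ) 1 → fX x = 0)
    (hX_law : Measure.map X P = volume.withDensity fun x => ENNReal.ofReal (fX x)) :
    Measure.map (fun ω => T ω ^ 2 + (1 - T ω ^ 2) * (2 * X ω - 1)) P =
      volume.withDensity fun s => ENNReal.ofReal
        (if s ∈ Set.Icc (-1 : ℝ) 1 then
          (1 / (2 * Real.sqrt 2)) *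
            ∫ x in (0 : ℝ)..((1 + s) / 2), fX x / Real.sqrt ((1 + s - 2 * x) * (1 - x))
        else 0) := by
  have hg : Measurable fun p : ℝ × ℝ => p.2 ^ 2 + (1 - p.2 ^ 2) * (2 * p.1 - 1) := by fun_prop
  have hcond : ∀ᵐ x ∂P.map X, (P.map T).map (fun t => t ^ 2 + (1 - t ^ 2) * (2 * x - 1)) =
      volume.withDensity (condDensityZ x) := by
    rw [hX_law, ae_withDensity_iff hfX_meas.ennreal_ofReal]
    filter_upwards [volume.ae_ne 1] with x hx1 hfx
    have hx : x ∈ Icc (0 : ℝ) 1 := by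
      by_contra h
      simp [hfX_supp x h] at hfx
    rw [hT_unif, map_uniform_eq_withDensity_condDensityZ (lt_of_le_of_ne hx.2 hx1)]
  have hlaw : P.map (fun ω => T ω ^ 2 + (1 - T ω ^ 2) * (2 * X ω - 1)) =
      volume.withDensity fun s => ∫⁻ x, condDensityZ x s ∂P.map X := by
    rw [← map_prod_eq_withDensity_lintegral hg measurable_condDensityZ hcond,
      ← (ProbabilityTheory.indepFun_iff_map_prod_eq_prod_map_map hX.aemeasurable
        hT.aemeasurable).1 hindep, Measure.map_map hg (hX.prodMk hT)]
    rfl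
  have hfin : ∀ᵐ s, ∫⁻ x, condDensityZ x s ∂P.map X < ∞ := by
    refine ae_lt_top measurable_condDensityZ.lintegral_prod_left' ?_
    rw [← setLIntegral_univ, ← withDensity_apply _ MeasurableSet.univ, ← hlaw]
    exact measure_ne_top _ _
  rw [hlaw]
  refine withDensity_congr_ae (hfin.mono fun s hs => ?_)
  dsimp only
  rw [hX_law, lintegral_withDensity_eq_lintegral_mul _ hfX_meas.ennreal_ofReal
    measurable_condDensityZ.of_uncurry_right] at hs ⊢
  exact lintegral_ofReal_mul_condDensityZ hfX_meas hfX_nonneg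
    (fun x hx => hfX_supp x fun h => h.1.not_gt hx) hs.ne
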